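/- arXiv:2602.04551 — 2 statements merged into one kernel-verified Lean document; each statement's English description precedes it below -/
import Mathlib

section
/- Optimal dual solution from an optimal primal solution: if β* minimizes P over the primal feasible set C, then r* = y − Xβ* maximizes D over ℝⁿ, and D(r*) = P(β*). -/
/-!
Writing `r` for a dual point,
`P β - D r = ½‖y - Xβ - r‖² + Σᵢ (ψᵢ(βᵢ) + νᵢ(|Xᵢᵀr|) - βᵢ Xᵢᵀr)`,
and `νᵢ(|·|)` is the convex conjugate of `ψᵢ` restricted to `[-M, M]` (to `{0}` for `i ∈ F0`),
with the supremum attained. Fenchel–Young makes every summand nonnegative: weak duality.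
At `r* = y - Xβ*` the first term vanishes, and so does each Fenchel–Young gap, because
`βᵢ*` minimises the convex function `t ↦ ψᵢ(t) - t Xᵢᵀr*` on `[-M, M]`: optimality of `β*` along
coordinate `i` gives this only up to an error `½‖Xᵢ‖² (t - βᵢ*)²`, which convexity removes by
moving `t` towards `βᵢ*`.
-/

open Matrix Finset Classical

noncomputable section
open scoped Classical

/-- The function `h` from the dual of the node relaxation. -/
noncomputable def hfun (lam0 lam2 M x : ℝ) : ℝ :=
  if x ≤ 2 * M * lam2 then x ^ 2 / (4 * lam2) - lam0 else M * x - lam0 - lam2 * M ^ 2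

/-- The per-coordinate penalty `ψ_i` of the node relaxation. -/
noncomputable def psi {p : ℕ} (lam0 lam2 M : ℝ) (F0 F1 : Set (Fin p)) (i : Fin p)
    (t : ℝ) : ℝ :=
  if i ∈ F0 then 0
  else if i ∈ F1 then lam0 + lam2 * t ^ 2
  else if Real.sqrt (lam0 / lam2) ≤ M then
    (if |t| ≤ Real.sqrt (lam0 / lam2) then 2 * Real.sqrt (lam0 * lam2) * |t|
     else lam0 + lam2 * t ^ 2)
  else (lam0 / M + lam2 * M) * |t|

/-- The per-coordinate dual penalty `ν_i`. -/
noncomputable def nufun {p : ℕ} (lam0 lam2 M : ℝ) (F0 F1 : Set (Fin p)) (i : Fin p)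
    (x : ℝ) : ℝ :=
  if i ∈ F0 then 0
  else if i ∈ F1 then hfun lam0 lam2 M x
  else if Real.sqrt (lam0 / lam2) ≤ M then max (hfun lam0 lam2 M x) 0
  else max (M * x - lam0 - lam2 * M ^ 2) 0

/-- The primal feasible set
`C = {β : ‖β‖_∞ ≤ M and β_i = 0 for all i ∈ F0}`. -/
def feasC {p : ℕ} (M : ℝ) (F0 : Set (Fin p)) : Set (Fin p → ℝ) :=
  {β | (∀ i, |β i| ≤ M) ∧ ∀ i ∈ F0, β i = 0}

/-- The primal objective `P(β) = (1/2)‖y − Xβ‖₂² + Σ_i ψ_i(β_i)`. -/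
noncomputable def primalP {n p : ℕ} (X : Matrix (Fin n) (Fin p) ℝ) (y : Fin n → ℝ)
    (lam0 lam2 M : ℝ) (F0 F1 : Set (Fin p)) (β : Fin p → ℝ) : ℝ :=
  (1 / 2) * ∑ j, (y j - ∑ i, X j i * β i) ^ 2 + ∑ i, psi lam0 lam2 M F0 F1 i (β i)

/-- The dual objective `D(r) = −(1/2)‖r‖₂² + ⟨y, r⟩ − Σ_i ν_i(|X_iᵀ r|)`. -/
noncomputable def dualD {n p : ℕ} (X : Matrix (Fin n) (Fin p) ℝ) (y : Fin n → ℝ)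
    (lam0 lam2 M : ℝ) (F0 F1 : Set (Fin p)) (r : Fin n → ℝ) : ℝ :=
  -(1 / 2) * ∑ j, r j ^ 2 + ∑ j, y j * r j
    - ∑ i, nufun lam0 lam2 M F0 F1 i |∑ j, X j i * r j|


open Topology in
theorem ConvexOn.isMinOn_of_le_add_mul_norm_sq {E : Type*} [SeminormedAddCommGroup E]
    [NormedSpace ℝ E] {s : Set E} {f : E → ℝ} {a : E} (hf : ConvexOn ℝ s f) (ha : a ∈ s)
    (K : ℝ) (h : ∀ x ∈ s, f a ≤ f x + K * ‖x - a‖ ^ 2) : IsMinOn f s a := by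
  refine isMinOn_iff.2 fun x hx => ?_
  have hslope : ∀ θ ∈ Set.Ioc (0 : ℝ) 1, f a - f x ≤ θ * (K * ‖x - a‖ ^ 2) := by
    rintro θ ⟨hθ0, hθ1⟩
    have hconv : f (a + θ • (x - a)) ≤ (1 - θ) * f a + θ * f x := by
      have := hf.2 ha hx (by linarith : 0 ≤ 1 - θ) hθ0.le (by ring)
      rwa [show (1 - θ) • a + θ • x = a + θ • (x - a) by
        rw [smul_sub, sub_smul, one_smul]; abel] at this
    have hnear := h _ (hf.1.add_smul_sub_mem ha hx ⟨hθ0.le, hθ1⟩)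
    rw [add_sub_cancel_left, norm_smul, Real.norm_of_nonneg hθ0.le, mul_pow] at hnear
    have : θ * (f a - f x) ≤ θ * (θ * (K * ‖x - a‖ ^ 2)) := by nlinarith
    exact le_of_mul_le_mul_left this hθ0
  have hlim : Filter.Tendsto (fun θ : ℝ => θ * (K * ‖x - a‖ ^ 2)) (𝓝[>] 0) (𝓝 0) := by
    have : Continuous fun θ : ℝ => θ * (K * ‖x - a‖ ^ 2) := by fun_prop
    simpa using (this.tendsto 0).mono_left nhdsWithin_le_nhds
  exact sub_nonpos.1 <| ge_of_tendsto hlim <|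
    Filter.mem_of_superset (Ioc_mem_nhdsGT one_pos) hslope

lemma Finset.sum_apply_update {ι α β : Type*} [Fintype ι] [DecidableEq ι] [AddCommGroup β]
    (f : ι → α → β) (g : ι → α) (i : ι) (a : α) :
    ∑ k, f k (Function.update g i a k) = ∑ k, f k (g k) + (f i a - f i (g i)) := by
  have hpt : ∀ k, f k (Function.update g i a k)
      = f k (g k) + if k = i then f i a - f i (g i) else 0 := by
    intro k
    rcases eq_or_ne k i with rfl | hk <;> simp [*]
  simp only [hpt, Finset.sum_add_distrib, Finset.sum_ite_eq', Finset.mem_univ, if_true]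

lemma mul_le_max_mul_zero {s t : ℝ} (ht0 : 0 ≤ t) (hts : t ≤ s) (a : ℝ) :
    t * a ≤ max (s * a) 0 := by
  rcases le_total a 0 with ha | ha
  · exact (mul_nonpos_of_nonneg_of_nonpos ht0 ha).trans (le_max_right _ _)
  · exact (mul_le_mul_of_nonneg_right hts ha).trans (le_max_left _ _)

section Penalty

variable {p : ℕ} {lam0 lam2 M : ℝ} {F0 F1 : Set (Fin p)} {i : Fin p}

lemma lam2_mul_sqrt_div_sq (hlam0 : 0 ≤ lam0) (hlam2 : 0 < lam2) :
    lam2 * √(lam0 / lam2) ^ 2 = lam0 := by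
  rw [Real.sq_sqrt (div_nonneg hlam0 hlam2.le)]
  field_simp

lemma sqrt_mul_eq_mul_sqrt_div (hlam0 : 0 ≤ lam0) (hlam2 : 0 < lam2) :
    √(lam0 * lam2) = lam2 * √(lam0 / lam2) := by
  rw [show lam0 * lam2 = lam0 / lam2 * lam2 ^ 2 by field_simp,
    Real.sqrt_mul (div_nonneg hlam0 hlam2.le), Real.sqrt_sq hlam2.le, mul_comm]

lemma mul_sub_le_hfun (hlam2 : 0 < lam2) {t : ℝ} (htM : t ≤ M) (x : ℝ) :
    t * x - (lam0 + lam2 * t ^ 2) ≤ hfun lam0 lam2 M x := by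
  unfold hfun
  split_ifs with hx
  · have h4 : x ^ 2 / (4 * lam2) * (4 * lam2) = x ^ 2 := by field_simp
    nlinarith [sq_nonneg (2 * lam2 * t - x)]
  · nlinarith [mul_nonneg (sub_nonneg.2 htM) (by nlinarith : (0:ℝ) ≤ x - lam2 * (M + t))]

lemma hfun_eq (hlam2 : 0 < lam2) (x : ℝ) :
    hfun lam0 lam2 M x
      = min (x / (2 * lam2)) M * x - (lam0 + lam2 * min (x / (2 * lam2)) M ^ 2) := by
  unfold hfun
  split_ifs with hx
  · rw [min_eq_left (by rw [div_le_iff₀ (by positivity)]; linarith)]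
    field_simp
    ring
  · rw [min_eq_right (by rw [le_div_iff₀ (by positivity)]; linarith)]
    ring

lemma hfun_nonpos (hlam0 : 0 ≤ lam0) (hlam2 : 0 < lam2) (hsM : √(lam0 / lam2) ≤ M) {x : ℝ}
    (hx0 : 0 ≤ x) (hx : x ≤ 2 * lam2 * √(lam0 / lam2)) : hfun lam0 lam2 M x ≤ 0 := by
  have hs := lam2_mul_sqrt_div_sq hlam0 hlam2
  have h4 : x ^ 2 / (4 * lam2) * (4 * lam2) = x ^ 2 := by field_simp
  rw [hfun, if_pos (by nlinarith)]
  nlinarith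

lemma hfun_nonneg (hlam0 : 0 ≤ lam0) (hlam2 : 0 < lam2) (hsM : √(lam0 / lam2) ≤ M) {x : ℝ}
    (hx : 2 * lam2 * √(lam0 / lam2) ≤ x) : 0 ≤ hfun lam0 lam2 M x := by
  have hs := lam2_mul_sqrt_div_sq hlam0 hlam2
  nlinarith [mul_sub_le_hfun (lam0 := lam0) hlam2 hsM x, Real.sqrt_nonneg (lam0 / lam2)]

lemma psi_abs (t : ℝ) : psi lam0 lam2 M F0 F1 i |t| = psi lam0 lam2 M F0 F1 i t := by
  simp [psi, sq_abs]

lemma psi_eq_of_sqrt_le (hlam0 : 0 ≤ lam0) (hlam2 : 0 < lam2) (hi0 : i ∉ F0) (hi1 : i ∉ F1)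
    (hsM : √(lam0 / lam2) ≤ M) (t : ℝ) :
    psi lam0 lam2 M F0 F1 i t
      = 2 * √(lam0 * lam2) * |t| + lam2 * max (|t| - √(lam0 / lam2)) 0 ^ 2 := by
  have hs := lam2_mul_sqrt_div_sq hlam0 hlam2
  simp only [psi, hi0, hi1, hsM, if_false, if_true, sqrt_mul_eq_mul_sqrt_div hlam0 hlam2]
  split_ifs with ht
  · rw [max_eq_right (by linarith)]
    ring
  · rw [max_eq_left (by linarith), ← sq_abs t]
    linear_combination (-1 : ℝ) * hs

lemma convexOn_psi (hlam0 : 0 ≤ lam0) (hlam2 : 0 < lam2) (hM : 0 < M) :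
    ConvexOn ℝ Set.univ (psi lam0 lam2 M F0 F1 i) := by
  have habs : ConvexOn ℝ Set.univ (fun t : ℝ => |t|) := convexOn_norm convex_univ
  by_cases hi0 : i ∈ F0
  · have hψ : psi lam0 lam2 M F0 F1 i = fun _ => 0 := funext fun t => by simp [psi, hi0]
    exact hψ ▸ convexOn_const 0 convex_univ
  by_cases hi1 : i ∈ F1
  · have hψ : psi lam0 lam2 M F0 F1 i = fun t => lam2 * t ^ 2 + lam0 :=
      funext fun t => by simp only [psi, hi0, hi1, if_false, if_true]; ring
    exact hψ ▸ ((Even.convexOn_pow even_two).smul hlam2.le).add_const lam0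
  by_cases hsM : √(lam0 / lam2) ≤ M
  · rw [funext (psi_eq_of_sqrt_le hlam0 hlam2 hi0 hi1 hsM)]
    have hplus : ConvexOn ℝ Set.univ fun t : ℝ => max (|t| - √(lam0 / lam2)) 0 :=
      (habs.add_const _).sup (convexOn_const 0 convex_univ)
    exact (habs.smul (by positivity)).add
      ((hplus.pow (fun t _ => le_max_right _ _) 2).smul hlam2.le)
  · have hψ : psi lam0 lam2 M F0 F1 i = fun t => (lam0 / M + lam2 * M) * |t| :=
      funext fun t => by simp [psi, hi0, hi1, hsM]
    exact hψ ▸ habs.smul (by positivity)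

lemma mul_le_psi_add_nufun_of_nonneg (hlam0 : 0 ≤ lam0) (hlam2 : 0 < lam2) (hM : 0 < M)
    {t x : ℝ} (ht0 : 0 ≤ t) (htM : t ≤ M) (hF0 : i ∈ F0 → t = 0) :
    t * x ≤ psi lam0 lam2 M F0 F1 i t + nufun lam0 lam2 M F0 F1 i x := by
  by_cases hi0 : i ∈ F0
  · simp [psi, nufun, hi0, hF0 hi0]
  by_cases hi1 : i ∈ F1
  · simp only [psi, nufun, hi0, hi1, if_false, if_true]
    linarith [mul_sub_le_hfun (lam0 := lam0) hlam2 htM x]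
  by_cases hsM : √(lam0 / lam2) ≤ M
  · have hν : nufun lam0 lam2 M F0 F1 i x = max (hfun lam0 lam2 M x) 0 := by
      simp [nufun, hi0, hi1, hsM]
    have hs := lam2_mul_sqrt_div_sq hlam0 hlam2
    have hfun_ge := mul_sub_le_hfun (lam0 := lam0) hlam2 hsM x
    rw [psi_eq_of_sqrt_le hlam0 hlam2 hi0 hi1 hsM, hν, abs_of_nonneg ht0,
      sqrt_mul_eq_mul_sqrt_div hlam0 hlam2]
    set s := √(lam0 / lam2)
    rcases le_total t s with hts | hst
    · have hkink := mul_le_max_mul_zero ht0 hts (x - 2 * lam2 * s)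
      have : max (s * (x - 2 * lam2 * s)) 0 ≤ max (hfun lam0 lam2 M x) 0 :=
        max_le_max_right 0 (by linarith)
      rw [max_eq_right (by linarith : t - s ≤ 0)]
      linarith
    · rw [max_eq_left (by linarith : 0 ≤ t - s)]
      nlinarith [le_max_left (hfun lam0 lam2 M x) 0,
        mul_sub_le_hfun (lam0 := lam0) hlam2 htM x]
  · simp only [psi, nufun, hi0, hi1, hsM, if_false, abs_of_nonneg ht0]
    have hcM : (lam0 / M + lam2 * M) * M = lam0 + lam2 * M ^ 2 := by field_simp
    have := mul_le_max_mul_zero ht0 htM (x - (lam0 / M + lam2 * M))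
    rw [show M * (x - (lam0 / M + lam2 * M)) = M * x - lam0 - lam2 * M ^ 2 by
      linear_combination -hcM] at this
    linarith

lemma exists_nufun_eq_of_nonneg (hlam0 : 0 ≤ lam0) (hlam2 : 0 < lam2) (hM : 0 < M)
    (hi0 : i ∉ F0) {x : ℝ} (hx : 0 ≤ x) :
    ∃ t, 0 ≤ t ∧ t ≤ M ∧
      nufun lam0 lam2 M F0 F1 i x = t * x - psi lam0 lam2 M F0 F1 i t := by
  set τ := min (x / (2 * lam2)) M
  have hτ0 : 0 ≤ τ := le_min (by positivity) hM.le
  have hτM : τ ≤ M := min_le_right _ _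
  by_cases hi1 : i ∈ F1
  · refine ⟨τ, hτ0, hτM, ?_⟩
    simp only [psi, nufun, hi0, hi1, if_false, if_true]
    exact hfun_eq hlam2 x
  by_cases hsM : √(lam0 / lam2) ≤ M
  · have hs := lam2_mul_sqrt_div_sq hlam0 hlam2
    have hν : nufun lam0 lam2 M F0 F1 i x = max (hfun lam0 lam2 M x) 0 := by
      simp [nufun, hi0, hi1, hsM]
    have hψ := psi_eq_of_sqrt_le hlam0 hlam2 hi0 hi1 hsM
    rw [sqrt_mul_eq_mul_sqrt_div hlam0 hlam2] at hψ
    set s := √(lam0 / lam2)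
    have hs0 : 0 ≤ s := Real.sqrt_nonneg _
    by_cases hxs : x ≤ 2 * lam2 * s
    · refine ⟨0, le_rfl, hM.le, ?_⟩
      rw [hν, hψ, max_eq_right (hfun_nonpos hlam0 hlam2 hsM hx hxs)]
      simp [hs0]
    · refine ⟨τ, hτ0, hτM, ?_⟩
      have hsτ : s ≤ τ := le_min (by rw [le_div_iff₀ (by positivity)]; linarith) hsM
      rw [hν, max_eq_left (hfun_nonneg hlam0 hlam2 hsM (not_le.1 hxs).le), hfun_eq hlam2 x,
        hψ, abs_of_nonneg hτ0, max_eq_left (by linarith)]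
      linear_combination hs
  · have hcM : (lam0 / M + lam2 * M) * M = lam0 + lam2 * M ^ 2 := by field_simp
    simp only [psi, nufun, hi0, hi1, hsM, if_false]
    by_cases hxc : x ≤ lam0 / M + lam2 * M
    · refine ⟨0, le_rfl, hM.le, ?_⟩
      rw [max_eq_right (by nlinarith)]
      simp
    · refine ⟨M, hM.le, le_rfl, ?_⟩
      rw [max_eq_left (by nlinarith), abs_of_nonneg hM.le]
      linarith

lemma mul_le_psi_add_nufun_abs (hlam0 : 0 ≤ lam0) (hlam2 : 0 < lam2) (hM : 0 < M)
    {t : ℝ} (htM : |t| ≤ M) (hF0 : i ∈ F0 → t = 0) (x : ℝ) :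
    t * x ≤ psi lam0 lam2 M F0 F1 i t + nufun lam0 lam2 M F0 F1 i |x| := by
  have h := mul_le_psi_add_nufun_of_nonneg (F1 := F1) (x := |x|) hlam0 hlam2 hM
    (abs_nonneg t) htM fun hi => by rw [hF0 hi, abs_zero]
  rw [psi_abs, ← abs_mul] at h
  exact (le_abs_self _).trans h

lemma exists_nufun_abs_eq (hlam0 : 0 ≤ lam0) (hlam2 : 0 < lam2) (hM : 0 < M) (hi0 : i ∉ F0)
    (x : ℝ) :
    ∃ t, |t| ≤ M ∧ nufun lam0 lam2 M F0 F1 i |x| = t * x - psi lam0 lam2 M F0 F1 i t := by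
  obtain ⟨τ, hτ0, hτM, hτ⟩ :=
    exists_nufun_eq_of_nonneg (F1 := F1) hlam0 hlam2 hM hi0 (abs_nonneg x)
  rcases le_total 0 x with hx | hx
  · exact ⟨τ, by rwa [abs_of_nonneg hτ0], by rw [hτ, abs_of_nonneg hx]⟩
  · refine ⟨-τ, by rwa [abs_neg, abs_of_nonneg hτ0], ?_⟩
    rw [hτ, abs_of_nonpos hx, ← psi_abs (-τ), abs_neg, abs_of_nonneg hτ0]
    ring

end Penalty

section Duality

variable {n p : ℕ} (X : Matrix (Fin n) (Fin p) ℝ) (y : Fin n → ℝ) {lam0 lam2 M : ℝ}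
  {F0 F1 : Set (Fin p)}

lemma primalP_sub_dualD (β : Fin p → ℝ) (r : Fin n → ℝ) :
    primalP X y lam0 lam2 M F0 F1 β - dualD X y lam0 lam2 M F0 F1 r
      = (1 / 2) * ∑ j, (y j - ∑ i, X j i * β i - r j) ^ 2
        + ∑ i, (psi lam0 lam2 M F0 F1 i (β i) + nufun lam0 lam2 M F0 F1 i |∑ j, X j i * r j|
            - β i * ∑ j, X j i * r j) := by
  have hcross : ∑ j, r j * ∑ i, X j i * β i = ∑ i, β i * ∑ j, X j i * r j := by
    simp only [Finset.mul_sum]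
    rw [Finset.sum_comm]
    exact Finset.sum_congr rfl fun i _ => Finset.sum_congr rfl fun j _ => by ring
  have hsq : ∀ j, (y j - ∑ i, X j i * β i - r j) ^ 2 = (y j - ∑ i, X j i * β i) ^ 2
      + r j ^ 2 - 2 * (y j * r j) + 2 * (r j * ∑ i, X j i * β i) := fun j => by ring
  simp only [primalP, dualD, hsq, Finset.sum_add_distrib, Finset.sum_sub_distrib,
    ← Finset.mul_sum, hcross]
  ring

lemma dualD_le_primalP (hlam0 : 0 ≤ lam0) (hlam2 : 0 < lam2) (hM : 0 < M) {β : Fin p → ℝ}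
    (hβ : β ∈ feasC M F0) (r : Fin n → ℝ) :
    dualD X y lam0 lam2 M F0 F1 r ≤ primalP X y lam0 lam2 M F0 F1 β := by
  have hgap := primalP_sub_dualD X y (lam0 := lam0) (lam2 := lam2) (M := M) (F0 := F0)
    (F1 := F1) β r
  have hres : 0 ≤ ∑ j, (y j - ∑ i, X j i * β i - r j) ^ 2 :=
    Finset.sum_nonneg fun j _ => sq_nonneg _
  have hcoord : 0 ≤ ∑ i, (psi lam0 lam2 M F0 F1 i (β i)
      + nufun lam0 lam2 M F0 F1 i |∑ j, X j i * r j| - β i * ∑ j, X j i * r j) :=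
    Finset.sum_nonneg fun i _ => sub_nonneg.2 <|
      mul_le_psi_add_nufun_abs hlam0 hlam2 hM (hβ.1 i) (hβ.2 i) _
  linarith

lemma update_mem_feasC {β : Fin p → ℝ} (hβ : β ∈ feasC M F0) {i : Fin p} (hi0 : i ∉ F0)
    {t : ℝ} (ht : |t| ≤ M) : Function.update β i t ∈ feasC M F0 := by
  refine ⟨fun k => ?_, fun k hk => ?_⟩
  · rcases eq_or_ne k i with rfl | hk
    · simpa using ht
    · simpa [hk] using hβ.1 k
  · rw [Function.update_of_ne (ne_of_mem_of_not_mem hk hi0)]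
    exact hβ.2 k hk

lemma primalP_update (β : Fin p → ℝ) (i : Fin p) (t : ℝ) :
    primalP X y lam0 lam2 M F0 F1 (Function.update β i t)
      = primalP X y lam0 lam2 M F0 F1 β
        + (psi lam0 lam2 M F0 F1 i t - t * ∑ j, X j i * (y j - ∑ k, X j k * β k))
        - (psi lam0 lam2 M F0 F1 i (β i) - β i * ∑ j, X j i * (y j - ∑ k, X j k * β k))
        + (1 / 2) * (∑ j, X j i ^ 2) * (t - β i) ^ 2 := by
  have hfit : ∀ j, ∑ k, X j k * Function.update β i t k
      = ∑ k, X j k * β k + X j i * (t - β i) := fun j => by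
    rw [Finset.sum_apply_update (fun k z => X j k * z)]
    ring
  have hsq : ∀ j, (y j - (∑ k, X j k * β k + X j i * (t - β i))) ^ 2
      = (y j - ∑ k, X j k * β k) ^ 2 - 2 * (t - β i) * (X j i * (y j - ∑ k, X j k * β k))
        + (t - β i) ^ 2 * X j i ^ 2 := fun j => by ring
  simp only [primalP, hfit, hsq, Finset.sum_apply_update (psi lam0 lam2 M F0 F1),
    Finset.sum_add_distrib, Finset.sum_sub_distrib, ← Finset.mul_sum]
  ring

lemma isMinOn_psi_sub_mul (hlam0 : 0 ≤ lam0) (hlam2 : 0 < lam2) (hM : 0 < M)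
    {β : Fin p → ℝ} (hmin : IsMinOn (primalP X y lam0 lam2 M F0 F1) (feasC M F0) β)
    (hβ : β ∈ feasC M F0) {i : Fin p} (hi0 : i ∉ F0) :
    IsMinOn (fun t => psi lam0 lam2 M F0 F1 i t - t * ∑ j, X j i * (y j - ∑ k, X j k * β k))
      (Set.Icc (-M) M) (β i) := by
  have hconv := ((convexOn_psi (F0 := F0) (F1 := F1) (i := i) hlam0 hlam2 hM).subset
    (Set.subset_univ _) (convex_Icc (-M) M)).sub
    ((LinearMap.mulRight ℝ (∑ j, X j i * (y j - ∑ k, X j k * β k))).concaveOn (convex_Icc _ _))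
  refine hconv.isMinOn_of_le_add_mul_norm_sq (abs_le.1 (hβ.1 i)) ((1 / 2) * ∑ j, X j i ^ 2)
    fun t ht => ?_
  have hupdate := isMinOn_iff.1 hmin _ (update_mem_feasC hβ hi0 (abs_le.2 ht))
  rw [primalP_update] at hupdate
  simp only [Pi.sub_apply, LinearMap.mulRight_apply, Real.norm_eq_abs, sq_abs]
  linarith

lemma psi_add_nufun_sub_mul_eq_zero (hlam0 : 0 ≤ lam0) (hlam2 : 0 < lam2) (hM : 0 < M)
    {β : Fin p → ℝ} (hmin : IsMinOn (primalP X y lam0 lam2 M F0 F1) (feasC M F0) β)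
    (hβ : β ∈ feasC M F0) (i : Fin p) :
    psi lam0 lam2 M F0 F1 i (β i)
      + nufun lam0 lam2 M F0 F1 i |∑ j, X j i * (y j - ∑ k, X j k * β k)|
      - β i * ∑ j, X j i * (y j - ∑ k, X j k * β k) = 0 := by
  by_cases hi0 : i ∈ F0
  · simp [psi, nufun, hi0, hβ.2 i hi0]
  obtain ⟨t, htM, ht⟩ := exists_nufun_abs_eq (F1 := F1) hlam0 hlam2 hM hi0
    (∑ j, X j i * (y j - ∑ k, X j k * β k))
  have hle := isMinOn_iff.1 (isMinOn_psi_sub_mul X y hlam0 hlam2 hM hmin hβ hi0) t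
    (abs_le.1 htM)
  have hge := mul_le_psi_add_nufun_abs (F1 := F1) hlam0 hlam2 hM (hβ.1 i) (hβ.2 i)
    (∑ j, X j i * (y j - ∑ k, X j k * β k))
  linarith

end Duality

theorem optimal_dual_from_optimal_primal_general {n p : ℕ} (X : Matrix (Fin n) (Fin p) ℝ)
    (y : Fin n → ℝ) (lam0 lam2 M : ℝ) (hlam0 : 0 ≤ lam0) (hlam2 : 0 < lam2) (hM : 0 < M)
    (F0 F1 : Set (Fin p))
    (βstar : Fin p → ℝ) (hfeas : βstar ∈ feasC M F0)
    (hmin : ∀ β ∈ feasC M F0,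
      primalP X y lam0 lam2 M F0 F1 βstar ≤ primalP X y lam0 lam2 M F0 F1 β) :
    (∀ r : Fin n → ℝ,
      dualD X y lam0 lam2 M F0 F1 r
        ≤ dualD X y lam0 lam2 M F0 F1 (fun j => y j - ∑ i, X j i * βstar i)) ∧
    dualD X y lam0 lam2 M F0 F1 (fun j => y j - ∑ i, X j i * βstar i)
      = primalP X y lam0 lam2 M F0 F1 βstar := by
  have hgap : primalP X y lam0 lam2 M F0 F1 βstar
      - dualD X y lam0 lam2 M F0 F1 (fun j => y j - ∑ i, X j i * βstar i) = 0 := by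
    rw [primalP_sub_dualD]
    simp [psi_add_nufun_sub_mul_eq_zero X y hlam0 hlam2 hM (isMinOn_iff.2 hmin) hfeas]
  have hstrong := sub_eq_zero.1 hgap
  exact ⟨fun r => hstrong ▸ dualD_le_primalP X y hlam0 hlam2 hM hfeas r, hstrong.symm⟩

/-- Optimal dual solution from an optimal primal solution: if `β*` minimizes `P` over
the primal feasible set `C`, then `r* = y − Xβ*` maximizes `D` over `ℝⁿ`, and
`D(r*) = P(β*)`. -/
theorem optimal_dual_from_optimal_primal {n p : ℕ} (X : Matrix (Fin n) (Fin p) ℝ)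
    (y : Fin n → ℝ) (lam0 lam2 M : ℝ) (hlam0 : 0 ≤ lam0) (hlam2 : 0 < lam2) (hM : 0 < M)
    (F0 F1 : Set (Fin p)) (hdisj : Disjoint F0 F1)
    (βstar : Fin p → ℝ) (hfeas : βstar ∈ feasC M F0)
    (hmin : ∀ β ∈ feasC M F0,
      primalP X y lam0 lam2 M F0 F1 βstar ≤ primalP X y lam0 lam2 M F0 F1 β) :
    (∀ r : Fin n → ℝ,
      dualD X y lam0 lam2 M F0 F1 r
        ≤ dualD X y lam0 lam2 M F0 F1 (fun j => y j - ∑ i, X j i * βstar i)) ∧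
    dualD X y lam0 lam2 M F0 F1 (fun j => y j - ∑ i, X j i * βstar i)
      = primalP X y lam0 lam2 M F0 F1 βstar :=
  optimal_dual_from_optimal_primal_general X y lam0 lam2 M hlam0 hlam2 hM F0 F1 βstar hfeas hmin
end
end

section
/- Scalar conjugate computation for free coordinates when √(λ0/λ2) ≤ M: for every c ∈ ℝ, the minimum of β ↦ ψ(β) − cβ over β ∈ [−M, M] equals −max(h(|c|), 0). -/
/-- The penalty `ψ` for a free coordinate in the regime `√(λ0/λ2) ≤ M`. -/
noncomputable def psiFree (lam0 lam2 : ℝ) (t : ℝ) : ℝ :=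
  if |t| ≤ Real.sqrt (lam0 / lam2) then 2 * Real.sqrt (lam0 * lam2) * |t|
  else lam0 + lam2 * t ^ 2

/-!
Write `S = √(λ0/λ2)`, so that `√(λ0λ2) = λ2 S` and `λ2 S² = λ0`. The penalty `ψ` is linear,
`2λ2 S |β|`, on `[-S, S]` and quadratic outside; the two pieces agree at `|β| = S`.

Since `cβ ≤ |c||β|` and `ψ` only depends on `|β|`, it suffices to bound `ψ(t) - dt` with
`d = |c|` and `t = |β| ∈ [0, M]`. If `d ≤ 2λ2 S` the linear minorant `2λ2 S t ≤ ψ(t)` gives `≥ 0`.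
Otherwise the linear piece decreases, so its minimum is at `t = S`, on the quadratic piece,
and `-h(d)` is the minimum of `λ0 + λ2 t² - dt` over `t ≤ M`. The minimisers are `0`,
`c / (2λ2)` and `±M` in the three regimes `d ≤ 2λ2 S`, `2λ2 S < d ≤ 2Mλ2`, `2Mλ2 < d`.
-/

lemma Real.sqrt_mul_eq_mul_sqrt_div (a : ℝ) {b : ℝ} (hb : 0 ≤ b) :
    Real.sqrt (a * b) = b * Real.sqrt (a / b) := by
  rcases hb.eq_or_lt with rfl | hb
  · simp
  rw [show a * b = a / b * b ^ 2 by field_simp, Real.sqrt_mul' _ (sq_nonneg b),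
    Real.sqrt_sq hb.le, mul_comm]

lemma neg_hfun_le (lam0 : ℝ) {lam2 M t : ℝ} (hlam2 : 0 < lam2) (htM : t ≤ M) (d : ℝ) :
    -hfun lam0 lam2 M d ≤ lam0 + lam2 * t ^ 2 - d * t := by
  unfold hfun
  split_ifs with hd
  · have : d * t - lam2 * t ^ 2 ≤ d ^ 2 / (4 * lam2) := by
      rw [le_div_iff₀ (by positivity)]
      nlinarith [sq_nonneg (d - 2 * lam2 * t)]
    linarith
  · nlinarith [mul_nonneg (sub_nonneg.2 htM) (by nlinarith : 0 ≤ d - lam2 * (t + M))]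

section psiFree

variable {lam0 lam2 : ℝ}

local notation "S" => Real.sqrt (lam0 / lam2)

lemma mul_sq_sqrt_div (hlam0 : 0 ≤ lam0) (hlam2 : 0 < lam2) : lam2 * S ^ 2 = lam0 := by
  rw [Real.sq_sqrt (div_nonneg hlam0 hlam2.le)]
  field_simp

lemma psiFree_of_abs_le (hlam2 : 0 < lam2) {t : ℝ} (ht : |t| ≤ S) :
    psiFree lam0 lam2 t = 2 * lam2 * S * |t| := by
  rw [psiFree, if_pos ht, Real.sqrt_mul_eq_mul_sqrt_div _ hlam2.le]
  ring

lemma psiFree_of_le_abs (hlam0 : 0 ≤ lam0) (hlam2 : 0 < lam2) {t : ℝ} (ht : S ≤ |t|) :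
    psiFree lam0 lam2 t = lam0 + lam2 * t ^ 2 := by
  rcases ht.lt_or_eq with ht | ht
  · rw [psiFree, if_neg (not_le.2 ht)]
  · rw [psiFree_of_abs_le hlam2 ht.ge, ← sq_abs t, ← ht]
    linear_combination mul_sq_sqrt_div hlam0 hlam2

lemma mul_abs_le_psiFree (hlam0 : 0 ≤ lam0) (hlam2 : 0 < lam2) (t : ℝ) :
    2 * lam2 * S * |t| ≤ psiFree lam0 lam2 t := by
  rcases le_total |t| S with ht | ht
  · exact (psiFree_of_abs_le hlam2 ht).ge
  · rw [psiFree_of_le_abs hlam0 hlam2 ht, ← sq_abs t]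
    nlinarith [sq_nonneg (|t| - S), mul_sq_sqrt_div hlam0 hlam2]

lemma quadratic_sqrt_sub_le_psiFree_sub (hlam0 : 0 ≤ lam0) (hlam2 : 0 < lam2)
    {d t : ℝ} (hd : 2 * lam2 * S ≤ d) (ht : |t| ≤ S) :
    lam0 + lam2 * S ^ 2 - d * S ≤ psiFree lam0 lam2 t - d * |t| := by
  rw [psiFree_of_abs_le hlam2 ht]
  nlinarith [mul_nonneg (sub_nonneg.2 hd) (sub_nonneg.2 ht), mul_sq_sqrt_div hlam0 hlam2]

lemma neg_max_hfun_le_psiFree_sub (hlam0 : 0 ≤ lam0) (hlam2 : 0 < lam2)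
    {M c β : ℝ} (hSM : S ≤ M) (hβ : |β| ≤ M) :
    -max (hfun lam0 lam2 M |c|) 0 ≤ psiFree lam0 lam2 β - c * β := by
  have hcβ : c * β ≤ |c| * |β| := (le_abs_self _).trans (abs_mul c β).le
  suffices -max (hfun lam0 lam2 M |c|) 0 ≤ psiFree lam0 lam2 β - |c| * |β| by linarith
  rcases le_or_gt |c| (2 * lam2 * S) with hc | hc
  · have := mul_abs_le_psiFree hlam0 hlam2 β
    have : 0 ≤ (2 * lam2 * S - |c|) * |β| := mul_nonneg (sub_nonneg.2 hc) (abs_nonneg β)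
    linarith [le_max_right (hfun lam0 lam2 M |c|) 0]
  refine (neg_le_neg (le_max_left _ _)).trans ?_
  rcases le_total |β| S with hβS | hβS
  · exact (neg_hfun_le lam0 hlam2 hSM |c|).trans
      (quadratic_sqrt_sub_le_psiFree_sub hlam0 hlam2 hc.le hβS)
  · rw [psiFree_of_le_abs hlam0 hlam2 hβS, ← sq_abs β]
    exact neg_hfun_le lam0 hlam2 hβ |c|

lemma exists_psiFree_sub_eq_neg_max_hfun (hlam0 : 0 ≤ lam0) (hlam2 : 0 < lam2) {M : ℝ}
    (hSM : S ≤ M) (c : ℝ) :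
    ∃ β ∈ Set.Icc (-M) M, psiFree lam0 lam2 β - c * β = -max (hfun lam0 lam2 M |c|) 0 := by
  have hS0 : 0 ≤ S := Real.sqrt_nonneg _
  have hS2 := mul_sq_sqrt_div hlam0 hlam2
  rcases le_or_gt |c| (2 * lam2 * S) with hcS | hcS
  · refine ⟨0, ⟨by linarith, by linarith⟩, ?_⟩
    have hh : hfun lam0 lam2 M |c| ≤ 0 := by
      rw [hfun, if_pos (by nlinarith), sub_nonpos, div_le_iff₀ (by positivity)]
      nlinarith [abs_nonneg c]
    rw [psiFree_of_abs_le hlam2 (by simp [hS0]), max_eq_right hh]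
    ring
  rcases le_or_gt |c| (2 * M * lam2) with hcM | hcM
  · have hβ : |c / (2 * lam2)| = |c| / (2 * lam2) := by
      rw [abs_div, abs_of_pos (by positivity : (0 : ℝ) < 2 * lam2)]
    have hSβ : S ≤ |c / (2 * lam2)| := by
      rw [hβ, le_div_iff₀ (by positivity)]
      linarith
    have hMβ : |c / (2 * lam2)| ≤ M := by
      rw [hβ, div_le_iff₀ (by positivity)]
      linarith
    have hh : 0 ≤ hfun lam0 lam2 M |c| := by
      rw [hfun, if_pos hcM, sub_nonneg, le_div_iff₀ (by positivity)]
      nlinarith [mul_self_le_mul_self (by positivity) hcS.le]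
    refine ⟨c / (2 * lam2), abs_le.1 hMβ, ?_⟩
    rw [psiFree_of_le_abs hlam0 hlam2 hSβ, max_eq_left hh, hfun, if_pos hcM, sq_abs]
    field_simp
    ring
  obtain ⟨β, hβ, hcβ⟩ : ∃ β, |β| = M ∧ c * β = M * |c| := by
    rcases le_total 0 c with hc | hc
    · exact ⟨M, abs_of_nonneg (hS0.trans hSM), by rw [abs_of_nonneg hc, mul_comm]⟩
    · exact ⟨-M, by rw [abs_neg, abs_of_nonneg (hS0.trans hSM)], by rw [abs_of_nonpos hc]; ring⟩
  have hh : 0 ≤ hfun lam0 lam2 M |c| := by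
    rw [hfun, if_neg (not_le.2 hcM)]
    nlinarith [mul_le_mul hSM hSM hS0 (hS0.trans hSM)]
  refine ⟨β, abs_le.1 hβ.le, ?_⟩
  rw [psiFree_of_le_abs hlam0 hlam2 (hβ ▸ hSM), hcβ, ← sq_abs β, hβ, max_eq_left hh, hfun,
    if_neg (not_le.2 hcM)]
  ring

end psiFree

theorem conjugate_free_coordinate_small_sqrt_general (lam0 lam2 M : ℝ) (hlam0 : 0 ≤ lam0)
    (hlam2 : 0 < lam2) (hcond : Real.sqrt (lam0 / lam2) ≤ M) (c : ℝ) :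
    IsLeast ((fun β : ℝ => psiFree lam0 lam2 β - c * β) '' Set.Icc (-M) M)
      (-(max (hfun lam0 lam2 M |c|) 0)) := by
  refine ⟨exists_psiFree_sub_eq_neg_max_hfun hlam0 hlam2 hcond c, ?_⟩
  rintro _ ⟨β, hβ, rfl⟩
  exact neg_max_hfun_le_psiFree_sub hlam0 hlam2 hcond (abs_le.2 hβ)

/-- Scalar conjugate computation for free coordinates when `√(λ0/λ2) ≤ M`: for every
`c ∈ ℝ`, the minimum of `β ↦ ψ(β) − c β` over `β ∈ [−M, M]` equals `−max(h(|c|), 0)`. -/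
theorem conjugate_free_coordinate_small_sqrt (lam0 lam2 M : ℝ) (hlam0 : 0 ≤ lam0)
    (hlam2 : 0 < lam2) (hM : 0 < M) (hcond : Real.sqrt (lam0 / lam2) ≤ M) (c : ℝ) :
    IsLeast ((fun β : ℝ => psiFree lam0 lam2 β - c * β) '' Set.Icc (-M) M)
      (-(max (hfun lam0 lam2 M |c|) 0)) :=
  conjugate_free_coordinate_small_sqrt_general lam0 lam2 M hlam0 hlam2 hcond c
end
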